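/- Let m ≥ 1 with 2 ∣ m, let g ≥ 2, let γ ∈ ZMod m, and let φ : ZMod m →+* ZMod 2 be the natural ring homomorphism; assume φ(γ) = 1 (γ is odd). Let W = W(m, g, γ) be the twist group defined in the context, acting on V = Fin g → ZMod m × ZMod m, and define q : V → ZMod 2 by q(x) = ∑ᵢ φ((1 − (x i).1)·(1 − (x i).2)). Then q(σ x) = q(x) for every σ ∈ W and every x ∈ V. (This is the invariance claim in the proof of Theorem 5.7: for g > 1 and m even, when all values on contours around holes and punctures are odd, the parity of Σᵢ (1−σ(aᵢ))(1−σ(bᵢ)) modulo 2 is preserved under all Dehn twists, so the Arf invariant δ is well defined and equals 1 on such Arf functions.) -/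

import Mathlib

/-- Shear of the `β`-components of `x : Fin g → ZMod m × ZMod m` by an amount depending
only on the `α`-components. -/
def shearB (m g : ℕ) (h : (Fin g → ZMod m) → Fin g → ZMod m) :
    Equiv.Perm (Fin g → ZMod m × ZMod m) where
  toFun x k := ((x k).1, (x k).2 + h (fun l => (x l).1) k)
  invFun x k := ((x k).1, (x k).2 - h (fun l => (x l).1) k)
  left_inv x := by funext k; simp
  right_inv x := by funext k; simp

/-- Shear of the `α`-components of `x : Fin g → ZMod m × ZMod m` by an amount depending
only on the `β`-components. -/
def shearA (m g : ℕ) (h : (Fin g → ZMod m) → Fin g → ZMod m) :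
    Equiv.Perm (Fin g → ZMod m × ZMod m) where
  toFun x k := ((x k).1 + h (fun l => (x l).2) k, (x k).2)
  invFun x k := ((x k).1 - h (fun l => (x l).2) k, (x k).2)
  left_inv x := by funext k; simp
  right_inv x := by funext k; simp

/-- Apply the permutation `e` of `ZMod m × ZMod m` at the single coordinate `i`. -/
def atC (m g : ℕ) (i : Fin g) (e : Equiv.Perm (ZMod m × ZMod m)) :
    Equiv.Perm (Fin g → ZMod m × ZMod m) :=
  Equiv.piCongrRight fun k => if k = i then e else Equiv.refl _

/-- `(α, β) ↦ (−α, −β)`. -/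
def negPair (m : ℕ) : Equiv.Perm (ZMod m × ZMod m) where
  toFun p := (-p.1, -p.2)
  invFun p := (-p.1, -p.2)
  left_inv := by rintro ⟨a, b⟩; simp
  right_inv := by rintro ⟨a, b⟩; simp

/-- `(α, β) ↦ (−β, α)`. -/
def rotPair (m : ℕ) : Equiv.Perm (ZMod m × ZMod m) where
  toFun p := (-p.2, p.1)
  invFun p := (p.2, -p.1)
  left_inv := by rintro ⟨a, b⟩; simp
  right_inv := by rintro ⟨a, b⟩; simp

/-- `(α, β) ↦ (−β, α − γ − 1)`. -/
def t3Pair (m : ℕ) (γ : ZMod m) : Equiv.Perm (ZMod m × ZMod m) where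
  toFun p := (-p.2, p.1 - γ - 1)
  invFun p := (p.2 + γ + 1, -p.1)
  left_inv := by rintro ⟨a, b⟩; simp [Prod.ext_iff]; ring
  right_inv := by rintro ⟨a, b⟩; simp [Prod.ext_iff]; ring

/-- Dehn twist action `T1a(i) : (αᵢ, βᵢ) ↦ (αᵢ+βᵢ, βᵢ)`. -/
def T1a (m g : ℕ) (i : Fin g) : Equiv.Perm (Fin g → ZMod m × ZMod m) :=
  shearA m g fun b k => if k = i then b i else 0

/-- Dehn twist action `T1b(i) : (αᵢ, βᵢ) ↦ (αᵢ, βᵢ+αᵢ)`. -/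
def T1b (m g : ℕ) (i : Fin g) : Equiv.Perm (Fin g → ZMod m × ZMod m) :=
  shearB m g fun a k => if k = i then a i else 0

/-- Dehn twist action `T2(i,j) : βᵢ ↦ βᵢ − αⱼ − 1, βⱼ ↦ βⱼ − αᵢ − 1`. -/
def T2 (m g : ℕ) (i j : Fin g) : Equiv.Perm (Fin g → ZMod m × ZMod m) :=
  shearB m g fun a k => if k = i then -a j - 1 else if k = j then -a i - 1 else 0

/-- Dehn twist action `T3` at the index `i`: `(αᵢ, βᵢ) ↦ (−βᵢ, αᵢ − γ − 1)`. -/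
def T3 (m g : ℕ) (i : Fin g) (γ : ZMod m) : Equiv.Perm (Fin g → ZMod m × ZMod m) :=
  atC m g i (t3Pair m γ)

/-- Dehn twist action `T4(i,j)`: interchange the pairs at positions `i` and `j`. -/
def T4 (m g : ℕ) (i j : Fin g) : Equiv.Perm (Fin g → ZMod m × ZMod m) :=
  Equiv.arrowCongr (Equiv.swap i j) (Equiv.refl _)

/-- Dehn twist action `T5a(i) : (αᵢ, βᵢ) ↦ (−αᵢ, −βᵢ)`. -/
def T5a (m g : ℕ) (i : Fin g) : Equiv.Perm (Fin g → ZMod m × ZMod m) :=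
  atC m g i (negPair m)

/-- Dehn twist action `T5b(i) : (αᵢ, βᵢ) ↦ (−βᵢ, αᵢ)`. -/
def T5b (m g : ℕ) (i : Fin g) : Equiv.Perm (Fin g → ZMod m × ZMod m) :=
  atC m g i (rotPair m)

/-- The generators of the twist group: `T1a(i)`, `T1b(i)`, `T2(i,j)` for `i ≠ j`, `T3` at
the last index, `T4(i,j)` for `i ≠ j`, `T5a(i)`, `T5b(i)`. -/
def twistGens (m g : ℕ) (hg : 0 < g) (γ : ZMod m) :
    Set (Equiv.Perm (Fin g → ZMod m × ZMod m)) :=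
  (Set.range fun i => T1a m g i) ∪ (Set.range fun i => T1b m g i) ∪
    {σ | ∃ i j : Fin g, i ≠ j ∧ σ = T2 m g i j} ∪
    {T3 m g ⟨g - 1, Nat.sub_lt hg Nat.one_pos⟩ γ} ∪
    {σ | ∃ i j : Fin g, i ≠ j ∧ σ = T4 m g i j} ∪
    (Set.range fun i => T5a m g i) ∪ (Set.range fun i => T5b m g i)

/-- The twist group `W(m, g, γ)`: the subgroup of `Equiv.Perm (Fin g → ZMod m × ZMod m)`
generated by the Dehn twist actions. -/
def twistGroup (m g : ℕ) (hg : 0 < g) (γ : ZMod m) :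
    Subgroup (Equiv.Perm (Fin g → ZMod m × ZMod m)) :=
  Subgroup.closure (twistGens m g hg γ)

/-!
Read modulo 2, the term `(1 - α)(1 - β)` is `1` exactly when `α` and `β` are both even. The
moves `T1a`, `T1b`, `T5a`, `T5b` preserve each term, and so does `T3` because `γ` is odd; `T4`
permutes the terms. `T2(i, j)` changes the `i`-th and the `j`-th term by the same amount
`(1 - αᵢ)(1 - αⱼ)`, and the two changes cancel modulo 2. A quantity preserved by the
generators is preserved by the group they generate.
-/

section Parity

variable {R ι : Type*} [CommRing R] [Fintype ι] (φ : R →+* ZMod 2)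

def pairParity (p : R × R) : ZMod 2 :=
  φ ((1 - p.1) * (1 - p.2))

def parity (x : ι → R × R) : ZMod 2 :=
  ∑ k, pairParity φ (x k)

lemma pairParity_eq (a b : R) : pairParity φ (a, b) = (1 - φ a) * (1 - φ b) := by
  simp only [pairParity, map_mul, map_sub, map_one]

lemma pairParity_add_snd_fst (a b : R) : pairParity φ (a + b, b) = pairParity φ (a, b) := by
  simp only [pairParity_eq, map_add]
  generalize φ a = A; generalize φ b = B
  revert A B; decide

lemma pairParity_fst_add_snd (a b : R) : pairParity φ (a, b + a) = pairParity φ (a, b) := by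
  simp only [pairParity_eq, map_add]
  generalize φ a = A; generalize φ b = B
  revert A B; decide

lemma pairParity_neg (a b : R) : pairParity φ (-a, -b) = pairParity φ (a, b) := by
  simp only [pairParity_eq, map_neg, ZMod.neg_eq_self_mod_two]

lemma pairParity_neg_snd_fst (a b : R) : pairParity φ (-b, a) = pairParity φ (a, b) := by
  rw [pairParity_eq, pairParity_eq, map_neg, ZMod.neg_eq_self_mod_two, mul_comm]

lemma pairParity_neg_snd_sub {γ : R} (hγ : φ γ = 1) (a b : R) :
    pairParity φ (-b, a - γ - 1) = pairParity φ (a, b) := by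
  simp only [pairParity_eq, map_neg, map_sub, map_one, hγ, ZMod.neg_eq_self_mod_two]
  generalize φ a = A; generalize φ b = B
  revert A B; decide

lemma pairParity_add_neg_sub_one (a b c : R) :
    pairParity φ (a, b + (-c - 1)) = pairParity φ (a, b) + (1 - φ a) * (1 - φ c) := by
  simp only [pairParity_eq, map_add, map_sub, map_neg, map_one]
  generalize φ a = A; generalize φ b = B; generalize φ c = C
  revert A B C; decide

variable [DecidableEq ι]

lemma parity_eq_of_changes_at {x y : ι → R × R} (i : ι)
    (hi : pairParity φ (y i) = pairParity φ (x i))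
    (hne : ∀ k ≠ i, y k = x k) : parity φ y = parity φ x := by
  refine Finset.sum_congr rfl fun k _ => ?_
  by_cases hk : k = i
  · rw [hk, hi]
  · rw [hne k hk]

lemma parity_eq_of_equal_changes_at_two {x y : ι → R × R} {i j : ι} (hij : i ≠ j) (c : ZMod 2)
    (hi : pairParity φ (y i) = pairParity φ (x i) + c)
    (hj : pairParity φ (y j) = pairParity φ (x j) + c)
    (hne : ∀ k, k ≠ i → k ≠ j → y k = x k) : parity φ y = parity φ x := by
  have hpoint : ∀ k, pairParity φ (y k) =
      pairParity φ (x k) + ((if k = i then c else 0) + if k = j then c else 0) := by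
    intro k
    by_cases hki : k = i
    · subst hki; simp [hi, hij]
    by_cases hkj : k = j
    · subst hkj; simp [hj, hki]
    simp [hne k hki hkj, hki, hkj]
  simp only [parity, hpoint, Finset.sum_add_distrib, Finset.sum_ite_eq', Finset.mem_univ,
    if_true, CharTwo.add_self_eq_zero, add_zero]

end Parity

lemma Equiv.Perm.comp_eq_of_mem_closure {α β : Type*} {S : Set (Equiv.Perm α)} {q : α → β}
    (hS : ∀ τ ∈ S, q ∘ τ = q) {σ : Equiv.Perm α} (hσ : σ ∈ Subgroup.closure S) : q ∘ σ = q := by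
  induction hσ using Subgroup.closure_induction with
  | mem τ hτ => exact hS τ hτ
  | one => rfl
  | mul a b _ _ ha hb => rw [Equiv.Perm.coe_mul, ← Function.comp_assoc, ha, hb]
  | inv a _ ha => rw [← ha, Function.comp_assoc, Equiv.Perm.coe_inv, Equiv.self_comp_symm,
      Function.comp_id, ha]

section Twists

variable {m g : ℕ} (φ : ZMod m →+* ZMod 2) (x : Fin g → ZMod m × ZMod m)

lemma parity_T1a (i : Fin g) : parity φ (T1a m g i x) = parity φ x :=
  parity_eq_of_changes_at φ i (by simpa [T1a, shearA] using pairParity_add_snd_fst φ _ _)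
    fun k hk => by simp [T1a, shearA, hk]

lemma parity_T1b (i : Fin g) : parity φ (T1b m g i x) = parity φ x :=
  parity_eq_of_changes_at φ i (by simpa [T1b, shearB] using pairParity_fst_add_snd φ _ _)
    fun k hk => by simp [T1b, shearB, hk]

lemma parity_T2 {i j : Fin g} (hij : i ≠ j) : parity φ (T2 m g i j x) = parity φ x :=
  parity_eq_of_equal_changes_at_two φ hij ((1 - φ (x i).1) * (1 - φ (x j).1))
    (by simpa [T2, shearB, hij] using pairParity_add_neg_sub_one φ (x i).1 (x i).2 (x j).1)
    (by simpa [T2, shearB, hij.symm, mul_comm] using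
      pairParity_add_neg_sub_one φ (x j).1 (x j).2 (x i).1)
    fun k hki hkj => by simp [T2, shearB, hki, hkj]

lemma parity_atC (i : Fin g) {e : Equiv.Perm (ZMod m × ZMod m)}
    (he : ∀ p, pairParity φ (e p) = pairParity φ p) : parity φ (atC m g i e x) = parity φ x :=
  parity_eq_of_changes_at φ i (by simpa [atC] using he (x i)) fun k hk => by simp [atC, hk]

lemma parity_T3 (i : Fin g) {γ : ZMod m} (hγ : φ γ = 1) : parity φ (T3 m g i γ x) = parity φ x :=
  parity_atC φ x i fun _ => pairParity_neg_snd_sub φ hγ _ _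

lemma parity_T4 (i j : Fin g) : parity φ (T4 m g i j x) = parity φ x :=
  Equiv.sum_comp (Equiv.swap i j).symm fun k => pairParity φ (x k)

lemma parity_T5a (i : Fin g) : parity φ (T5a m g i x) = parity φ x :=
  parity_atC φ x i fun _ => pairParity_neg φ _ _

lemma parity_T5b (i : Fin g) : parity φ (T5b m g i x) = parity φ x :=
  parity_atC φ x i fun _ => pairParity_neg_snd_fst φ _ _

end Twists

lemma parity_comp_eq_of_mem_twistGens {m g : ℕ} (hg : 0 < g) {γ : ZMod m}
    (φ : ZMod m →+* ZMod 2) (hγ : φ γ = 1) :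
    ∀ τ ∈ twistGens m g hg γ, parity φ ∘ τ = parity φ := by
  rintro τ ((((((⟨i, rfl⟩ | ⟨i, rfl⟩) | ⟨i, j, hij, rfl⟩) | rfl) | ⟨i, j, -, rfl⟩) | ⟨i, rfl⟩) |
    ⟨i, rfl⟩) <;> funext x
  · exact parity_T1a φ x i
  · exact parity_T1b φ x i
  · exact parity_T2 φ x hij
  · exact parity_T3 φ x _ hγ
  · exact parity_T4 φ x i j
  · exact parity_T5a φ x i
  · exact parity_T5b φ x i

/-- The invariance claim in the proof of Theorem 5.7: for `g > 1`, `m` even and `γ` odd,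
the parity `q(x) = Σᵢ (1−αᵢ)(1−βᵢ) mod 2` is preserved by every element of the twist
group, so the Arf invariant `δ` is well defined. -/
theorem twist_parity_invariant (m g : ℕ) (hg : 2 ≤ g)
    (h2 : (2 : ℕ) ∣ m) (γ : ZMod m) (hγ : ZMod.castHom h2 (ZMod 2) γ = 1) :
    ∀ σ ∈ twistGroup m g (by omega) γ, ∀ x : Fin g → ZMod m × ZMod m,
      (∑ i : Fin g, ZMod.castHom h2 (ZMod 2) ((1 - ((σ x) i).1) * (1 - ((σ x) i).2)))
        = ∑ i : Fin g, ZMod.castHom h2 (ZMod 2) ((1 - (x i).1) * (1 - (x i).2)) := by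
  intro σ hσ x
  exact congrFun (Equiv.Perm.comp_eq_of_mem_closure
    (parity_comp_eq_of_mem_twistGens _ _ hγ) hσ) x
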